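/- arXiv:1609.04539 — 7 statements merged into one kernel-verified Lean document; each statement's English description precedes it below -/
import Mathlib

section
/- Let V be a vector space over ℂ and let d, δ : V → V be ℂ-linear maps with d ∘ d = 0 and d ∘ δ = −δ ∘ d. Suppose there exists a ℂ-linear automorphism J of V satisfying d ∘ J = J ∘ δ and δ ∘ J = −J ∘ d. Then range(d ∘ δ) = range(δ) ∩ ker(d) holds if and only if range(d ∘ δ) = range(d) ∩ ker(δ) holds. -/
/-- Lemma 4.1 of the paper (algebraic form): if `d ∘ d = 0`, `d ∘ δ = -(δ ∘ d)` and there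
exists a linear automorphism `J` with `d ∘ J = J ∘ δ` and `δ ∘ J = -(J ∘ d)`, then
`range (d ∘ δ) = range δ ⊓ ker d` iff `range (d ∘ δ) = range d ⊓ ker δ`. -/
theorem stmt0 {V : Type*} [AddCommGroup V] [Module ℂ V]
    (d δ : V →ₗ[ℂ] V)
    (hdd : d ∘ₗ d = 0)
    (hanti : d ∘ₗ δ = -(δ ∘ₗ d))
    (hJ : ∃ J : V ≃ₗ[ℂ] V,
      d ∘ₗ (J : V →ₗ[ℂ] V) = (J : V →ₗ[ℂ] V) ∘ₗ δ ∧
      δ ∘ₗ (J : V →ₗ[ℂ] V) = -((J : V →ₗ[ℂ] V) ∘ₗ d)) :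
    LinearMap.range (d ∘ₗ δ) = LinearMap.range δ ⊓ LinearMap.ker d ↔
      LinearMap.range (d ∘ₗ δ) = LinearMap.range d ⊓ LinearMap.ker δ := by
  obtain ⟨J, hdJ, hδJ⟩ := hJ
  have hdd' : ∀ x, d (d x) = 0 := fun x => by
    have := LinearMap.congr_fun hdd x; simpa using this
  have hanti' : ∀ x, d (δ x) = -δ (d x) := fun x => by
    have := LinearMap.congr_fun hanti x; simpa using this
  have hdJ' : ∀ x, d (J x) = J (δ x) := fun x => by
    have := LinearMap.congr_fun hdJ x; simpa using this
  have hδJ' : ∀ x, δ (J x) = -J (d x) := fun x => by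
    have := LinearMap.congr_fun hδJ x; simpa using this
  -- inverse relations
  have hdJi : ∀ x, J.symm (d x) = δ (J.symm x) := fun x => by
    have h := hdJ' (J.symm x)
    rw [J.apply_symm_apply] at h
    rw [h, J.symm_apply_apply]
  have hδJi : ∀ x, J.symm (δ x) = -d (J.symm x) := fun x => by
    have h := hδJ' (J.symm x)
    rw [J.apply_symm_apply] at h
    rw [h]; simp
  have hδδ : ∀ x, δ (δ x) = 0 := fun x => by
    have h := hδJ' (J.symm x)
    rw [J.apply_symm_apply] at h
    rw [h]
    have := hδJ' (d (J.symm x))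
    simp only [map_neg, this, hdd', map_zero, neg_zero]
  constructor
  · intro h
    apply le_antisymm
    · rintro x ⟨y, rfl⟩
      refine ⟨⟨δ y, rfl⟩, ?_⟩
      show δ ((d ∘ₗ δ) y) = 0
      have h0 := hanti' (δ y)
      rw [hδδ y, map_zero] at h0
      exact neg_eq_zero.mp h0.symm
    · rintro x ⟨⟨y, rfl⟩, hx⟩
      replace hx : δ (d y) = 0 := hx
      have h1 : J.symm (d y) ∈ LinearMap.range δ ⊓ LinearMap.ker d := by
        refine ⟨⟨J.symm y, (hdJi y).symm⟩, ?_⟩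
        show d (J.symm (d y)) = 0
        have h2 := hδJi (d y)
        rw [hx, map_zero] at h2
        exact neg_eq_zero.mp h2.symm
      rw [← h] at h1
      obtain ⟨z, hz⟩ := h1
      refine ⟨J z, ?_⟩
      simp only [LinearMap.coe_comp, Function.comp_apply] at hz ⊢
      have : d y = J (d (δ z)) := by
        rw [hz, J.apply_symm_apply]
      rw [this]
      have e1 : J (d (δ z)) = -δ (J (δ z)) := by
        have := hδJ' (δ z); rw [this]; simp
      have e2 : J (δ z) = d (J z) := (hdJ' z).symm
      rw [e1, e2, hanti' (J z)]
  · intro h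
    apply le_antisymm
    · rintro x ⟨y, rfl⟩
      simp only [LinearMap.coe_comp, Function.comp_apply]
      refine ⟨⟨-(d y), ?_⟩, ?_⟩
      · rw [map_neg, ← hanti' y]
      · exact hdd' (δ y)
    · rintro x ⟨⟨y, rfl⟩, hx⟩
      replace hx : d (δ y) = 0 := hx
      have h1 : J (δ y) ∈ LinearMap.range d ⊓ LinearMap.ker δ := by
        refine ⟨⟨J y, hdJ' y⟩, ?_⟩
        show δ (J (δ y)) = 0
        rw [hδJ' (δ y), hx, map_zero, neg_zero]
      rw [← h] at h1
      obtain ⟨z, hz⟩ := h1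
      refine ⟨J.symm z, ?_⟩
      simp only [LinearMap.coe_comp, Function.comp_apply] at hz ⊢
      have : δ y = J.symm (d (δ z)) := by rw [hz, J.symm_apply_apply]
      rw [this, hdJi (δ z), hδJi z, map_neg, hanti' (J.symm z)]
end

section
/- Let V be a vector space over ℂ and let d, δ : V → V be ℂ-linear maps with d ∘ d = 0 and d ∘ δ = −δ ∘ d. If range(d ∘ δ) = ker(d) ∩ range(δ), then for every α ∈ V with dα = 0 there exist β, γ ∈ V such that α = β + dγ, dβ = 0, and δβ = 0; that is, every d-cohomology class has a δ-closed representative. -/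
/-- Surjectivity half of Theorem 4.1 (algebraic form): if `d ∘ d = 0`,
`d ∘ δ = -(δ ∘ δ)` and `range (d ∘ δ) = ker d ⊓ range δ`, then every `d`-cohomology
class has a `δ`-closed representative. -/
theorem stmt2 {V : Type*} [AddCommGroup V] [Module ℂ V]
    (d δ : V →ₗ[ℂ] V)
    (hdd : d ∘ₗ d = 0)
    (hanti : d ∘ₗ δ = -(δ ∘ₗ d))
    (hlemma : LinearMap.range (d ∘ₗ δ) = LinearMap.ker d ⊓ LinearMap.range δ) :
    ∀ α : V, d α = 0 →
      ∃ β γ : V, α = β + d γ ∧ d β = 0 ∧ δ β = 0 := by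
  intro α hα
  have hmem : δ α ∈ LinearMap.range (d ∘ₗ δ) := by
    rw [hlemma]
    refine ⟨?_, ⟨α, rfl⟩⟩
    have := congrArg (fun f => f α) hanti
    simp only [LinearMap.comp_apply, LinearMap.neg_apply] at this
    simp [this, hα]
  obtain ⟨γ, hγ⟩ := hmem
  simp only [LinearMap.comp_apply] at hγ
  refine ⟨α + d γ, -γ, by simp, ?_, ?_⟩
  · have := congrArg (fun f => f γ) hdd
    simp only [LinearMap.comp_apply, LinearMap.zero_apply] at this
    simp [hα, this]
  · have := congrArg (fun f => f γ) hanti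
    simp only [LinearMap.comp_apply, LinearMap.neg_apply] at this
    have h2 : δ (d γ) = -δ α := by rw [← hγ]; rw [this]; abel
    simp [h2]
end

section
/- Let V be a vector space over ℂ and let d, δ : V → V be ℂ-linear maps with d ∘ d = 0, δ ∘ δ = 0 and d ∘ δ = −δ ∘ d, and suppose there exists a ℂ-linear automorphism J of V with d ∘ J = J ∘ δ and δ ∘ J = −J ∘ d. Then the following are equivalent: (1) range(d ∘ δ) = range(d) ∩ ker(δ) and range(d ∘ δ) = ker(d) ∩ range(δ); (2) the inclusion of the subcomplex (ker δ, d) into (V, d) induces an isomorphism in cohomology, i.e. the natural ℂ-linear map from (ker d ∩ ker δ)/d(ker δ) to (ker d)/range(d) is bijective. -/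
open LinearMap

/-- The natural map in cohomology induced by the inclusion of the subcomplex
`(ker δ, d)` into `(V, d)`: it goes from `(ker d ⊓ ker δ) / d(ker δ)` to
`(ker d) / range d`, sending a class to the class of the same element. -/
noncomputable def cohIncl {V : Type*} [AddCommGroup V] [Module ℂ V]
    (d δ : V →ₗ[ℂ] V) :
    ((LinearMap.ker d ⊓ LinearMap.ker δ : Submodule ℂ V) ⧸
        (((LinearMap.ker δ).map d).comap
          (LinearMap.ker d ⊓ LinearMap.ker δ : Submodule ℂ V).subtype)) →ₗ[ℂ]
      (LinearMap.ker d ⧸ (LinearMap.range d).comap (LinearMap.ker d).subtype) :=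
  Submodule.mapQ _ _ (Submodule.inclusion inf_le_left) (by
    intro x hx
    simp only [Submodule.mem_comap, Submodule.mem_map, Submodule.coe_subtype] at hx ⊢
    obtain ⟨y, -, hy⟩ := hx
    exact ⟨y, hy⟩)

section aux
variable {V : Type*} [AddCommGroup V] [Module ℂ V] (d δ : V →ₗ[ℂ] V)

lemma cohIncl_inj_iff :
    Function.Injective (cohIncl d δ) ↔
      ∀ x : V, d x = 0 → δ x = 0 → x ∈ LinearMap.range d →
        ∃ u, δ u = 0 ∧ d u = x := by
  rw [injective_iff_map_eq_zero]
  constructor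
  · intro h x hdx hδx hrx
    have hx : x ∈ (LinearMap.ker d ⊓ LinearMap.ker δ : Submodule ℂ V) :=
      ⟨hdx, hδx⟩
    have h0 : cohIncl d δ (Submodule.Quotient.mk ⟨x, hx⟩) = 0 := by
      rw [cohIncl, Submodule.mapQ_apply, Submodule.Quotient.mk_eq_zero]
      simpa [Submodule.mem_comap] using hrx
    have := h _ h0
    rw [Submodule.Quotient.mk_eq_zero] at this
    simp only [Submodule.mem_comap, Submodule.mem_map, Submodule.coe_subtype] at this
    obtain ⟨u, hu1, hu2⟩ := this
    exact ⟨u, hu1, hu2⟩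
  · intro h q hq
    obtain ⟨⟨x, hx⟩, rfl⟩ := Submodule.Quotient.mk_surjective _ q
    rw [cohIncl, Submodule.mapQ_apply, Submodule.Quotient.mk_eq_zero] at hq
    simp only [Submodule.mem_comap] at hq
    obtain ⟨u, hu1, hu2⟩ := h x hx.1 hx.2 hq
    rw [Submodule.Quotient.mk_eq_zero]
    exact ⟨u, hu1, hu2⟩

lemma cohIncl_surj_iff :
    Function.Surjective (cohIncl d δ) ↔
      ∀ x : V, d x = 0 → ∃ y, d y = 0 ∧ δ y = 0 ∧ x - y ∈ LinearMap.range d := by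
  constructor
  · intro h x hdx
    obtain ⟨q, hq⟩ := h (Submodule.Quotient.mk ⟨x, hdx⟩)
    obtain ⟨⟨y, hy⟩, rfl⟩ := Submodule.Quotient.mk_surjective _ q
    rw [cohIncl, Submodule.mapQ_apply, Submodule.Quotient.eq] at hq
    simp only [Submodule.mem_comap] at hq
    simp only [Submodule.mem_comap, Submodule.coe_subtype, AddSubgroupClass.coe_sub,
      Submodule.coe_inclusion] at hq
    exact ⟨y, hy.1, hy.2, by simpa using neg_mem hq⟩
  · intro h q
    obtain ⟨⟨x, hdx⟩, rfl⟩ := Submodule.Quotient.mk_surjective _ q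
    obtain ⟨y, hy1, hy2, hy3⟩ := h x hdx
    refine ⟨Submodule.Quotient.mk ⟨y, hy1, hy2⟩, ?_⟩
    rw [cohIncl, Submodule.mapQ_apply, Submodule.Quotient.eq]
    simp only [Submodule.mem_comap, Submodule.coe_subtype, AddSubgroupClass.coe_sub,
      Submodule.coe_inclusion]
    simpa using neg_mem hy3

end aux

/-- Theorem 4.1 of the paper (algebraic form): the basic `dd^𝒥`-lemma holds iff the
inclusion of the subcomplex `(ker δ, d)` into `(V, d)` induces an isomorphism in
cohomology. -/
theorem stmt3 {V : Type*} [AddCommGroup V] [Module ℂ V]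
    (d δ : V →ₗ[ℂ] V)
    (hdd : d ∘ₗ d = 0)
    (hδδ : δ ∘ₗ δ = 0)
    (hanti : d ∘ₗ δ = -(δ ∘ₗ d))
    (hJ : ∃ J : V ≃ₗ[ℂ] V,
      d ∘ₗ (J : V →ₗ[ℂ] V) = (J : V →ₗ[ℂ] V) ∘ₗ δ ∧
      δ ∘ₗ (J : V →ₗ[ℂ] V) = -((J : V →ₗ[ℂ] V) ∘ₗ d)) :
    (LinearMap.range (d ∘ₗ δ) = LinearMap.range d ⊓ LinearMap.ker δ ∧
      LinearMap.range (d ∘ₗ δ) = LinearMap.ker d ⊓ LinearMap.range δ) ↔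
      Function.Bijective (cohIncl d δ) := by
  have hdd' : ∀ v : V, d (d v) = 0 := fun v => by
    simpa using LinearMap.congr_fun hdd v
  have hδδ' : ∀ v : V, δ (δ v) = 0 := fun v => by
    simpa using LinearMap.congr_fun hδδ v
  have hanti' : ∀ v : V, d (δ v) = -δ (d v) := fun v => by
    simpa using LinearMap.congr_fun hanti v
  have hanti2 : ∀ v : V, δ (d v) = -d (δ v) := fun v => by
    rw [hanti', neg_neg]
  constructor
  · rintro ⟨h1, h2⟩
    constructor
    · -- injectivity
      rw [cohIncl_inj_iff]
      intro x hdx hδx hrx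
      have hx : x ∈ LinearMap.range (d ∘ₗ δ) := by
        rw [h1]
        exact Submodule.mem_inf.mpr ⟨hrx, hδx⟩
      obtain ⟨z, hz⟩ := hx
      exact ⟨δ z, hδδ' z, hz⟩
    · -- surjectivity
      rw [cohIncl_surj_iff]
      intro x hdx
      have hδx : δ x ∈ LinearMap.range (d ∘ₗ δ) := by
        rw [h2]
        refine Submodule.mem_inf.mpr ⟨?_, ⟨x, rfl⟩⟩
        rw [LinearMap.mem_ker, hanti', hdx, map_zero, neg_zero]
      obtain ⟨z, hz⟩ := hδx
      simp only [LinearMap.comp_apply] at hz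
      refine ⟨x + d z, ?_, ?_, ⟨-z, by simp⟩⟩
      · rw [map_add, hdx, hdd', add_zero]
      · rw [map_add, hanti2, hz]
        simp
  · rintro ⟨hinj, hsurj⟩
    obtain ⟨J, hJ1, hJ2⟩ := hJ
    have hJ1' : ∀ v : V, d (J v) = J (δ v) := fun v => by
      simpa using LinearMap.congr_fun hJ1 v
    have hJ2' : ∀ v : V, δ (J v) = -J (d v) := fun v => by
      simpa using LinearMap.congr_fun hJ2 v
    have hd_inv : ∀ v : V, d (J.symm v) = -J.symm (δ v) := fun v => by
      have h := hJ2' (J.symm v)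
      rw [J.apply_symm_apply] at h
      have h2 : J.symm (δ v) = -d (J.symm v) := by rw [h]; simp
      rw [h2, neg_neg]
    have hcomm : ∀ v : V, d (δ (J.symm v)) = J.symm (d (δ v)) := fun v => by
      have key : ∀ z : V, d (δ (J z)) = J (d (δ z)) := fun z => by
        rw [hJ2', map_neg, hJ1', hanti']
        simp
      have h := key (J.symm v)
      rw [J.apply_symm_apply] at h
      rw [h, J.symm_apply_apply]
    rw [cohIncl_inj_iff] at hinj
    rw [cohIncl_surj_iff] at hsurj
    have easy1 : LinearMap.range (d ∘ₗ δ) ≤ LinearMap.range d ⊓ LinearMap.ker δ := by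
      rintro _ ⟨z, rfl⟩
      refine Submodule.mem_inf.mpr ⟨⟨δ z, rfl⟩, ?_⟩
      rw [LinearMap.mem_ker, LinearMap.comp_apply]
      have h := hanti' (δ z)
      rw [hδδ', map_zero] at h
      exact neg_eq_zero.mp h.symm
    have easy2 : LinearMap.range (d ∘ₗ δ) ≤ LinearMap.ker d ⊓ LinearMap.range δ := by
      rintro _ ⟨z, rfl⟩
      refine Submodule.mem_inf.mpr ⟨?_, ⟨-d z, ?_⟩⟩
      · rw [LinearMap.mem_ker, LinearMap.comp_apply, hdd']
      · rw [LinearMap.comp_apply, map_neg, hanti' z]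
    have hard1 : LinearMap.range d ⊓ LinearMap.ker δ ≤ LinearMap.range (d ∘ₗ δ) := by
      intro x hx
      obtain ⟨hr, hk⟩ := Submodule.mem_inf.mp hx
      obtain ⟨w, rfl⟩ := hr
      have hδx : δ (d w) = 0 := hk
      obtain ⟨u, hu1, hu2⟩ := hinj (d w) (hdd' w) hδx ⟨w, rfl⟩
      have hdJu : d (J u) = 0 := by rw [hJ1', hu1, map_zero]
      obtain ⟨y, hy1, hy2, ⟨w', hw'⟩⟩ := hsurj (J u) hdJu
      have hu : u = J.symm y + J.symm (d w') := by
        have hJu : J u = y + d w' := by rw [hw']; abel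
        rw [← map_add]
        exact (J.symm_apply_eq.mpr hJu.symm).symm
      have hkey : d w = J.symm (d (δ w')) := by
        rw [← hu2, hu, map_add, hd_inv, hd_inv, hy2, hanti2 w']
        simp
      refine ⟨J.symm w', ?_⟩
      rw [LinearMap.comp_apply, hcomm, ← hkey]
    refine ⟨le_antisymm easy1 hard1, le_antisymm easy2 ?_⟩
    intro x hx
    obtain ⟨hdx, hr⟩ := Submodule.mem_inf.mp hx
    obtain ⟨y, rfl⟩ := hr
    have hdx' : d (δ y) = 0 := hdx
    have h1 : J (δ y) ∈ LinearMap.range d ⊓ LinearMap.ker δ := by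
      refine Submodule.mem_inf.mpr ⟨⟨J y, hJ1' y⟩, ?_⟩
      rw [LinearMap.mem_ker, hJ2', hdx', map_zero, neg_zero]
    obtain ⟨z, hz⟩ := hard1 h1
    rw [LinearMap.comp_apply] at hz
    refine ⟨J.symm z, ?_⟩
    rw [LinearMap.comp_apply, hcomm, hz, J.symm_apply_apply]
end

section
/- Let V be a vector space over ℂ and let d, δ : V → V be ℂ-linear maps with d ∘ d = 0, δ ∘ δ = 0 and d ∘ δ = −δ ∘ d. If the inclusion of the subcomplex (ker δ, d) into (V, d) induces an isomorphism in cohomology (i.e. the natural map (ker d ∩ ker δ)/d(ker δ) → (ker d)/range(d) is bijective), then range(δ ∘ d) = range(δ) ∩ ker(d). -/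
open LinearMap

/-- Converse direction of Theorem 4.1 (algebraic form): if the inclusion of the
subcomplex `(ker δ, d)` into `(V, d)` induces an isomorphism in cohomology, then
`range (δ ∘ d) = range δ ⊓ ker d`. -/
theorem stmt4 {V : Type*} [AddCommGroup V] [Module ℂ V]
    (d δ : V →ₗ[ℂ] V)
    (hdd : d ∘ₗ d = 0)
    (hδδ : δ ∘ₗ δ = 0)
    (hanti : d ∘ₗ δ = -(δ ∘ₗ d))
    (hbij : Function.Bijective (cohIncl d δ)) :
    LinearMap.range (δ ∘ₗ d) = LinearMap.range δ ⊓ LinearMap.ker d := by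
  have hdd' : ∀ x, d (d x) = 0 := fun x => congrFun (congrArg DFunLike.coe hdd) x
  have hδδ' : ∀ x, δ (δ x) = 0 := fun x => congrFun (congrArg DFunLike.coe hδδ) x
  have hanti' : ∀ x, d (δ x) = -(δ (d x)) := fun x => by
    have := congrFun (congrArg DFunLike.coe hanti) x
    simpa using this
  apply le_antisymm
  · rintro _ ⟨x, rfl⟩
    refine ⟨⟨d x, rfl⟩, ?_⟩
    show d (δ (d x)) = 0
    rw [hanti' (d x), hdd' x, map_zero, neg_zero]
  · rintro y ⟨⟨x, rfl⟩, hy⟩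
    replace hy : d (δ x) = 0 := hy
    -- Step 1: d x ∈ ker d ⊓ ker δ
    have h1 : d x ∈ LinearMap.ker d ⊓ LinearMap.ker δ := by
      refine ⟨hdd' x, ?_⟩
      have h := hanti' x
      rw [hy] at h
      exact neg_eq_zero.mp h.symm
    -- Step 2: by injectivity, d x ∈ (ker δ).map d
    have h2 : d x ∈ (LinearMap.ker δ).map d := by
      set a : ↥(LinearMap.ker d ⊓ LinearMap.ker δ) := ⟨d x, h1⟩ with ha
      have hz : cohIncl d δ (Submodule.Quotient.mk a) = 0 := by
        rw [cohIncl, Submodule.mapQ_apply, Submodule.Quotient.mk_eq_zero]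
        simp only [Submodule.mem_comap]
        exact ⟨x, rfl⟩
      have := hbij.1 (by rw [hz, map_zero] :
        cohIncl d δ (Submodule.Quotient.mk a) = cohIncl d δ 0)
      rw [Submodule.Quotient.mk_eq_zero] at this
      exact this
    obtain ⟨v, hv, hvd⟩ := h2
    -- Step 3: x - v ∈ ker d; use surjectivity
    have hxv : x - v ∈ LinearMap.ker d := by
      simp only [LinearMap.mem_ker, map_sub, hvd, sub_self]
    obtain ⟨c, hc⟩ := hbij.2 (Submodule.Quotient.mk ⟨x - v, hxv⟩)
    obtain ⟨z, rfl⟩ := Submodule.Quotient.mk_surjective _ c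
    rw [cohIncl, Submodule.mapQ_apply] at hc
    rw [Submodule.Quotient.eq] at hc
    simp only [Submodule.mem_comap] at hc
    obtain ⟨s, hs⟩ := hc
    -- hs : d s = (z : V) - (x - v)
    have hδz : δ (z : V) = 0 := z.2.2
    refine ⟨-s, ?_⟩
    simp only [LinearMap.coe_comp, Function.comp_apply, map_neg]
    have hcoe : ((Submodule.inclusion inf_le_left z : ↥(LinearMap.ker d)) : V)
        = (z : V) := rfl
    have hs' : d s = (z : V) - (x - v) := by
      have := hs
      simpa [hcoe] using this
    have : δ (d s) = δ (z : V) - δ x + δ v := by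
      rw [hs']; simp [map_sub]
      abel
    have hδv : δ v = 0 := hv
    rw [this, hδz, hδv]
    abel
end

section
/- Let V be a vector space over ℂ equipped with an internal direct sum decomposition V = ⊕_{k ∈ ℤ} U^k into subspaces U^k, and let ∂, ∂̄ : V → V be ℂ-linear maps with ∂(U^k) ⊆ U^{k+1}, ∂̄(U^k) ⊆ U^{k−1}, ∂ ∘ ∂ = 0, ∂̄ ∘ ∂̄ = 0 and ∂ ∘ ∂̄ + ∂̄ ∘ ∂ = 0. Set d := ∂ + ∂̄ and δ := i(∂̄ − ∂). Then the dd^𝒥-lemma, i.e. range(d ∘ δ) = range(d) ∩ ker(δ) = ker(d) ∩ range(δ), holds if and only if the ∂∂̄-lemma, i.e. range(∂ ∘ ∂̄) = range(∂) ∩ ker(∂̄) = ker(∂) ∩ range(∂̄), holds. -/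
private lemma key10 {V : Type*} [AddCommGroup V] [Module ℂ V]
    (A B : V →ₗ[ℂ] V)
    (hAA : ∀ x, A (A x) = 0) (hBB : ∀ x, B (B x) = 0)
    (hAB : ∀ x, A (B x) + B (A x) = 0) :
    (LinearMap.range (A ∘ₗ B) = LinearMap.range A ⊓ LinearMap.ker B ∧
     LinearMap.range (A ∘ₗ B) = LinearMap.ker A ⊓ LinearMap.range B) ↔
    (LinearMap.ker A ⊓ LinearMap.ker B ⊓ (LinearMap.range A ⊔ LinearMap.range B)
      ≤ LinearMap.range (A ∘ₗ B)) := by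
  constructor
  · rintro ⟨h1, h2⟩ x ⟨⟨hxA, hxB⟩, hxS⟩
    simp only [SetLike.mem_coe] at hxS hxA hxB
    rw [Submodule.mem_sup] at hxS
    obtain ⟨y, ⟨u, rfl⟩, z, ⟨v, rfl⟩, rfl⟩ := hxS
    rw [LinearMap.mem_ker, map_add, hAA, zero_add] at hxA
    rw [LinearMap.mem_ker, map_add, hBB, add_zero] at hxB
    have hAu : A u ∈ LinearMap.range (A ∘ₗ B) := by
      rw [h1]
      exact ⟨⟨u, rfl⟩, hxB⟩
    have hBv : B v ∈ LinearMap.range (A ∘ₗ B) := by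
      rw [h2]
      exact ⟨hxA, ⟨v, rfl⟩⟩
    exact add_mem hAu hBv
  · intro hE
    constructor
    · apply le_antisymm
      · rintro x ⟨u, rfl⟩
        refine ⟨⟨B u, rfl⟩, ?_⟩
        have := hAB (B u)
        rw [hBB u, map_zero, zero_add] at this
        simpa using this
      · rintro x ⟨⟨y, rfl⟩, hker⟩
        exact hE ⟨⟨by simpa using hAA y, hker⟩, le_sup_left (α := Submodule ℂ V) ⟨y, rfl⟩⟩
    · apply le_antisymm
      · rintro x ⟨u, rfl⟩
        refine ⟨by simpa using hAA (B u), ?_⟩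
        have h : A (B u) = -(B (A u)) := eq_neg_of_add_eq_zero_left (hAB u)
        exact ⟨-(A u), by simp [h]⟩
      · rintro x ⟨hker, ⟨y, rfl⟩⟩
        exact hE ⟨⟨hker, by simpa using hBB y⟩, le_sup_right (α := Submodule ℂ V) ⟨y, rfl⟩⟩

/-- Definition 4.1 of the paper (algebraic form): with `d = ∂ + ∂̄` and
`δ = d^𝒥 = i(∂̄ - ∂)`, the `dd^𝒥`-lemma is equivalent to the `∂∂̄`-lemma. -/
theorem stmt10 {V : Type*} [AddCommGroup V] [Module ℂ V]
    (U : ℤ → Submodule ℂ V) (hU : DirectSum.IsInternal U)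
    (p q : V →ₗ[ℂ] V)
    (hp : ∀ k : ℤ, ∀ x ∈ U k, p x ∈ U (k + 1))
    (hq : ∀ k : ℤ, ∀ x ∈ U k, q x ∈ U (k - 1))
    (hpp : p ∘ₗ p = 0)
    (hqq : q ∘ₗ q = 0)
    (hpq : p ∘ₗ q + q ∘ₗ p = 0) :
    (LinearMap.range ((p + q) ∘ₗ (Complex.I • (q - p))) =
        LinearMap.range (p + q) ⊓ LinearMap.ker (Complex.I • (q - p)) ∧
      LinearMap.range ((p + q) ∘ₗ (Complex.I • (q - p))) =
        LinearMap.ker (p + q) ⊓ LinearMap.range (Complex.I • (q - p))) ↔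
      (LinearMap.range (p ∘ₗ q) = LinearMap.range p ⊓ LinearMap.ker q ∧
        LinearMap.range (p ∘ₗ q) = LinearMap.ker p ⊓ LinearMap.range q) := by
  have hpp' : ∀ x, p (p x) = 0 := fun x => by
    simpa using LinearMap.ext_iff.mp hpp x
  have hqq' : ∀ x, q (q x) = 0 := fun x => by
    simpa using LinearMap.ext_iff.mp hqq x
  have hpq' : ∀ x, p (q x) + q (p x) = 0 := fun x => by
    simpa using LinearMap.ext_iff.mp hpq x
  have hqp : ∀ x, q (p x) = -(p (q x)) := fun x =>
    eq_neg_of_add_eq_zero_left (by rw [add_comm]; exact hpq' x)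
  have hdd : ∀ x, (p + q) ((p + q) x) = 0 := fun x => by
    simp only [LinearMap.add_apply, map_add, hpp', hqq', hqp]
    abel
  have hδδ : ∀ x, (Complex.I • (q - p)) ((Complex.I • (q - p)) x) = 0 := fun x => by
    simp only [LinearMap.smul_apply, LinearMap.sub_apply, map_smul, map_sub,
      hpp', hqq', hqp, smul_smul]
    simp
  have hdδ : ∀ x, (p + q) ((Complex.I • (q - p)) x)
      + (Complex.I • (q - p)) ((p + q) x) = 0 := fun x => by
    simp only [LinearMap.add_apply, LinearMap.smul_apply, LinearMap.sub_apply,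
      map_smul, map_sub, map_add, hpp', hqq', hqp]
    module
  rw [key10 (p + q) (Complex.I • (q - p)) hdd hδδ hdδ, key10 p q hpp' hqq' hpq']
  have hcomp : ∀ x, ((p + q) ∘ₗ (Complex.I • (q - p))) x
      = (2 * Complex.I) • (p ∘ₗ q) x := fun x => by
    simp only [LinearMap.comp_apply, LinearMap.add_apply, LinearMap.smul_apply,
      LinearMap.sub_apply, map_smul, map_sub, hpp', hqq', hqp]
    module
  have e1 : LinearMap.ker (p + q) ⊓ LinearMap.ker (Complex.I • (q - p))
      = LinearMap.ker p ⊓ LinearMap.ker q := by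
    ext x
    simp only [Submodule.mem_inf, LinearMap.mem_ker, LinearMap.add_apply,
      LinearMap.smul_apply, LinearMap.sub_apply, smul_eq_zero, Complex.I_ne_zero,
      false_or, sub_eq_zero]
    constructor
    · rintro ⟨h1, h2⟩
      rw [← h2] at h1
      have h3 : (2 : ℂ) • q x = 0 := by rw [two_smul]; exact h1
      have h4 : q x = 0 := by
        rcases smul_eq_zero.mp h3 with h | h
        · exact absurd h two_ne_zero
        · exact h
      exact ⟨by rw [← h2]; exact h4, h4⟩
    · rintro ⟨h1, h2⟩
      exact ⟨by rw [h1, h2, add_zero], by rw [h1, h2]⟩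
  have e2 : LinearMap.range (p + q) ⊔ LinearMap.range (Complex.I • (q - p))
      = LinearMap.range p ⊔ LinearMap.range q := by
    apply le_antisymm
    · apply sup_le
      · rintro x ⟨y, rfl⟩
        exact Submodule.mem_sup.mpr ⟨p y, ⟨y, rfl⟩, q y, ⟨y, rfl⟩, rfl⟩
      · rintro x ⟨y, rfl⟩
        refine Submodule.mem_sup.mpr ⟨p (-Complex.I • y), ⟨_, rfl⟩,
          q (Complex.I • y), ⟨_, rfl⟩, ?_⟩
        simp only [map_smul, LinearMap.smul_apply, LinearMap.sub_apply]
        module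
    · apply sup_le
      · rintro x ⟨y, rfl⟩
        refine Submodule.mem_sup.mpr ⟨(p + q) ((1/2 : ℂ) • y), ⟨_, rfl⟩,
          (Complex.I • (q - p)) ((Complex.I / 2) • y), ⟨_, rfl⟩, ?_⟩
        simp only [LinearMap.add_apply, LinearMap.smul_apply, LinearMap.sub_apply,
          map_smul, smul_smul]
        rw [show (Complex.I / 2 * Complex.I : ℂ) = -(1/2) by
          rw [div_mul_eq_mul_div, Complex.I_mul_I]; norm_num]
        module
      · rintro x ⟨y, rfl⟩
        refine Submodule.mem_sup.mpr ⟨(p + q) ((1/2 : ℂ) • y), ⟨_, rfl⟩,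
          (Complex.I • (q - p)) ((-Complex.I / 2) • y), ⟨_, rfl⟩, ?_⟩
        simp only [LinearMap.add_apply, LinearMap.smul_apply, LinearMap.sub_apply,
          map_smul, smul_smul]
        rw [show (-Complex.I / 2 * Complex.I : ℂ) = (1/2) by
          rw [div_mul_eq_mul_div, neg_mul, Complex.I_mul_I]; norm_num]
        module
  have e3 : LinearMap.range ((p + q) ∘ₗ (Complex.I • (q - p)))
      = LinearMap.range (p ∘ₗ q) := by
    ext x
    constructor
    · rintro ⟨y, rfl⟩
      rw [hcomp]
      exact ⟨(2 * Complex.I) • y, by simp [map_smul]⟩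
    · rintro ⟨y, rfl⟩
      refine ⟨(2 * Complex.I)⁻¹ • y, ?_⟩
      rw [hcomp, map_smul, smul_smul, mul_inv_cancel₀ (by simp [Complex.I_ne_zero]),
        one_smul]
  rw [e1, e2, e3]
end

section
/- Let V be a vector space over ℂ equipped with an internal direct sum decomposition V = ⊕_{k ∈ ℤ} U^k into subspaces U^k, and let ∂, ∂̄ : V → V be ℂ-linear maps with ∂(U^k) ⊆ U^{k+1} and ∂̄(U^k) ⊆ U^{k−1}. Set d := ∂ + ∂̄ and δ := i(∂̄ − ∂), and assume d ∘ d = 0 and that range(d ∘ δ) = range(d) ∩ ker(δ) = ker(d) ∩ range(δ). For each k let H^k denote the subspace of the cohomology H := (ker d)/range(d) consisting of classes admitting a representative lying in U^k ∩ ker d. Then the subspaces H^k span H and their sum is direct; that is, H = ⊕_k H^k. -/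
section Helpers

variable {V : Type*} [AddCommGroup V] [Module ℂ V] {U : ℤ → Submodule ℂ V}

lemma sum_eq_zero_of_internal (hU : DirectSum.IsInternal U) {c : ℤ → V}
    (hc : ∀ k, c k ∈ U k) {s : Finset ℤ} (h : ∑ k ∈ s, c k = 0) :
    ∀ k ∈ s, c k = 0 := by
  intro k hk
  have hind : Disjoint (U k) (⨆ j, ⨆ _ : j ≠ k, U j) := hU.submodule_iSupIndep k
  have h1 : c k = - ∑ j ∈ s.erase k, c j := by
    have h2 : c k + ∑ j ∈ s.erase k, c j = 0 := by
      rw [Finset.add_sum_erase s c hk]; exact h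
    exact eq_neg_of_add_eq_zero_left h2
  have h2 : c k ∈ ⨆ j, ⨆ _ : j ≠ k, U j := by
    rw [h1]
    exact neg_mem (Submodule.sum_mem _ fun j hj =>
      Submodule.mem_iSup_of_mem j (Submodule.mem_iSup_of_mem
        (Finset.ne_of_mem_erase hj) (hc j)))
  exact Submodule.disjoint_def.mp hind _ (hc k) h2

lemma exists_decomp_of_internal (hU : DirectSum.IsInternal U) (x : V) :
    ∃ (s : Finset ℤ) (c : ℤ → V), (∀ k, c k ∈ U k) ∧ (∀ k ∉ s, c k = 0) ∧
      x = ∑ k ∈ s, c k := by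
  have hx : x ∈ ⨆ k, U k := hU.submodule_iSup_eq_top ▸ Submodule.mem_top
  refine Submodule.iSup_induction (motive := fun x => ∃ (s : Finset ℤ) (c : ℤ → V),
    (∀ k, c k ∈ U k) ∧ (∀ k ∉ s, c k = 0) ∧ x = ∑ k ∈ s, c k) U hx ?_ ?_ ?_
  · intro i x hxi
    refine ⟨{i}, fun j => if j = i then x else 0, ?_, ?_, ?_⟩
    · intro j
      by_cases h : j = i
      · subst h; simpa using hxi
      · simp [h]
    · intro j hj; simp at hj; simp [hj]
    · simp
  · exact ⟨∅, 0, fun k => zero_mem _, fun _ _ => rfl, by simp⟩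
  · rintro x y ⟨s, c, hc, hc0, rfl⟩ ⟨t, e, he, he0, rfl⟩
    refine ⟨s ∪ t, fun k => c k + e k, fun k => add_mem (hc k) (he k), ?_, ?_⟩
    · intro k hk
      simp only [Finset.mem_union, not_or] at hk
      simp only []
      rw [hc0 k hk.1, he0 k hk.2, add_zero]
    · rw [Finset.sum_add_distrib,
        Finset.sum_subset Finset.subset_union_left (fun k _ hk => hc0 k hk),
        Finset.sum_subset Finset.subset_union_right (fun k _ hk => he0 k hk)]

end Helpers


/-- The subspace of the cohomology `(ker d) / range d` consisting of classes that
admit a representative lying in `Uk ⊓ ker d`. -/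
noncomputable def cohClasses {V : Type*} [AddCommGroup V] [Module ℂ V]
    (d : V →ₗ[ℂ] V) (Uk : Submodule ℂ V) :
    Submodule ℂ
      (LinearMap.ker d ⧸ (LinearMap.range d).comap (LinearMap.ker d).subtype) :=
  Submodule.map ((LinearMap.range d).comap (LinearMap.ker d).subtype).mkQ
    (Uk.comap (LinearMap.ker d).subtype)

set_option maxHeartbeats 2000000 in
/-- Theorem 4.3 of the paper (algebraic form): the basic `dd^𝒥`-lemma implies that the
subspaces `U^k` induce a decomposition in cohomology, i.e. the cohomology
`H = (ker d)/range d` is the internal direct sum of the subspaces `H^k` of classes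
with a representative in `U^k ⊓ ker d`. Here `d = ∂ + ∂̄` and `δ = i(∂̄ - ∂)`. -/
theorem stmt11 {V : Type*} [AddCommGroup V] [Module ℂ V]
    (U : ℤ → Submodule ℂ V) (hU : DirectSum.IsInternal U)
    (p q : V →ₗ[ℂ] V)
    (hp : ∀ k : ℤ, ∀ x ∈ U k, p x ∈ U (k + 1))
    (hq : ∀ k : ℤ, ∀ x ∈ U k, q x ∈ U (k - 1))
    (hdd : (p + q) ∘ₗ (p + q) = 0)
    (hlem1 : LinearMap.range ((p + q) ∘ₗ (Complex.I • (q - p))) =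
      LinearMap.range (p + q) ⊓ LinearMap.ker (Complex.I • (q - p)))
    (hlem2 : LinearMap.range ((p + q) ∘ₗ (Complex.I • (q - p))) =
      LinearMap.ker (p + q) ⊓ LinearMap.range (Complex.I • (q - p))) :
    DirectSum.IsInternal (fun k : ℤ => cohClasses (p + q) (U k)) := by
  -- pointwise d ∘ d = 0
  have hd2 : ∀ x : V, (p + q) ((p + q) x) = 0 := by
    intro x
    have := LinearMap.ext_iff.mp hdd x
    simpa using this
  -- squares vanish on pure elements
  have hsq : ∀ k : ℤ, ∀ x ∈ U k,
      p (p x) = 0 ∧ p (q x) + q (p x) = 0 ∧ q (q x) = 0 := by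
    intro k x hx
    have hexp : p (p x) + (p (q x) + q (p x)) + q (q x) = 0 := by
      have h := hd2 x
      simp only [LinearMap.add_apply, map_add] at h
      calc p (p x) + (p (q x) + q (p x)) + q (q x)
          = p (p x) + q (p x) + (p (q x) + q (q x)) := by abel
        _ = 0 := h
    classical
    set c : ℤ → V := fun j => if j = k + 2 then p (p x)
      else if j = k then p (q x) + q (p x)
      else if j = k - 2 then q (q x) else 0 with hcdef
    have e1 : c (k + 2) = p (p x) := by simp [hcdef]
    have e2 : c k = p (q x) + q (p x) := by
      rw [hcdef]; simp [show ¬(k = k + 2) from by omega]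
    have e3 : c (k - 2) = q (q x) := by
      rw [hcdef]
      simp [show ¬(k - 2 = k + 2) from by omega, show ¬(k - 2 = k) from by omega]
    have hc : ∀ j, c j ∈ U j := by
      intro j
      rw [hcdef]; simp only []
      split_ifs with h1 h2 h3
      · rw [h1]
        have := hp (k + 1) _ (hp k x hx)
        rwa [show k + 1 + 1 = k + 2 by ring] at this
      · rw [h2]
        refine add_mem ?_ ?_
        · have := hp (k - 1) _ (hq k x hx)
          rwa [show k - 1 + 1 = k by ring] at this
        · have := hq (k + 1) _ (hp k x hx)
          rwa [show k + 1 - 1 = k by ring] at this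
      · rw [h3]
        have := hq (k - 1) _ (hq k x hx)
        rwa [show k - 1 - 1 = k - 2 by ring] at this
      · exact zero_mem _
    have hsum : ∑ j ∈ ({k + 2, k, k - 2} : Finset ℤ), c j = 0 := by
      rw [Finset.sum_insert (by simp; omega),
        Finset.sum_insert (by simp; omega), Finset.sum_singleton,
        e1, e2, e3, ← add_assoc]
      exact hexp
    have hz := sum_eq_zero_of_internal hU hc hsum
    refine ⟨?_, ?_, ?_⟩
    · rw [← e1]; exact hz (k + 2) (by simp)
    · rw [← e2]; exact hz k (by simp)
    · rw [← e3]; exact hz (k - 2) (by simp)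
  -- global squares vanish
  have hpp : ∀ x : V, p (p x) = 0 := by
    intro x
    obtain ⟨s, c, hc, -, rfl⟩ := exists_decomp_of_internal hU x
    rw [map_sum, map_sum]
    exact Finset.sum_eq_zero fun k _ => (hsq k _ (hc k)).1
  have hqq : ∀ x : V, q (q x) = 0 := by
    intro x
    obtain ⟨s, c, hc, -, rfl⟩ := exists_decomp_of_internal hU x
    rw [map_sum, map_sum]
    exact Finset.sum_eq_zero fun k _ => (hsq k _ (hc k)).2.2
  -- d δ computed
  have hDdelta : ∀ x : V, (p + q) ((Complex.I • (q - p)) x)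
      = Complex.I • (p (q x) - q (p x)) := by
    intro x
    rw [LinearMap.smul_apply, LinearMap.sub_apply, map_smul, map_sub]
    simp only [LinearMap.add_apply, hpp, hqq, add_zero, zero_add]
  -- δ d = - d δ
  have hanti : ∀ x : V, (Complex.I • (q - p)) ((p + q) x)
      = -((p + q) ((Complex.I • (q - p)) x)) := by
    intro x
    rw [hDdelta, LinearMap.smul_apply, LinearMap.sub_apply, LinearMap.add_apply,
      map_add, map_add]
    simp only [hpp, hqq, add_zero, zero_add]
    rw [← smul_neg, neg_sub]
  -- d δ preserves degree
  have hDdeltaPure : ∀ k : ℤ, ∀ x ∈ U k,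
      (p + q) ((Complex.I • (q - p)) x) ∈ U k := by
    intro k x hx
    rw [hDdelta]
    refine Submodule.smul_mem _ _ (sub_mem ?_ ?_)
    · have := hp (k - 1) _ (hq k x hx)
      rwa [show k - 1 + 1 = k by ring] at this
    · have := hq (k + 1) _ (hp k x hx)
      rwa [show k + 1 - 1 = k by ring] at this
  -- pure closed elements are p- and q-closed
  have hpure : ∀ k : ℤ, ∀ x ∈ U k, (p + q) x = 0 → p x = 0 ∧ q x = 0 := by
    intro k x hx hdx
    classical
    set c : ℤ → V := fun j => if j = k + 1 then p x
      else if j = k - 1 then q x else 0 with hcdef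
    have e1 : c (k + 1) = p x := by simp [hcdef]
    have e2 : c (k - 1) = q x := by
      rw [hcdef]; simp [show ¬(k - 1 = k + 1) from by omega]
    have hc : ∀ j, c j ∈ U j := by
      intro j
      rw [hcdef]; simp only []
      split_ifs with h1 h2
      · rw [h1]; exact hp k x hx
      · rw [h2]; exact hq k x hx
      · exact zero_mem _
    have hsum : ∑ j ∈ ({k + 1, k - 1} : Finset ℤ), c j = 0 := by
      rw [Finset.sum_insert (by simp; omega), Finset.sum_singleton, e1, e2]
      simpa using hdx
    have hz := sum_eq_zero_of_internal hU hc hsum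
    exact ⟨by rw [← e1]; exact hz (k + 1) (by simp),
      by rw [← e2]; exact hz (k - 1) (by simp)⟩
  rw [DirectSum.isInternal_submodule_iff_iSupIndep_and_iSup_eq_top]
  constructor
  · -- independence
    rw [iSupIndep_iff_dfinsupp_lsum_injective, injective_iff_map_eq_zero]
    intro f hf
    classical
    have hmem : ∀ k : ℤ, ∃ w : LinearMap.ker (p + q),
        w ∈ (U k).comap (LinearMap.ker (p + q)).subtype ∧
        ((LinearMap.range (p + q)).comap (LinearMap.ker (p + q)).subtype).mkQ w
          = (f k : _) := by
      intro k
      have h2 := (f k).2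
      simp only [cohClasses] at h2
      obtain ⟨w, hw1, hw2⟩ := Submodule.mem_map.mp h2
      exact ⟨w, hw1, hw2⟩
    choose w hw hweq using hmem
    -- sum of classes is zero
    have hrepr : ∑ k ∈ f.support, DFinsupp.single k (f k) = f := by
      conv_rhs => rw [← DFinsupp.sum_single (f := f)]
      rfl
    have hfsum : ∑ k ∈ f.support,
        ((f k : _) : LinearMap.ker (p + q) ⧸
          (LinearMap.range (p + q)).comap (LinearMap.ker (p + q)).subtype) = 0 := by
      have h := congrArg (DFinsupp.lsum ℕ
        fun i => (cohClasses (p + q) (U i)).subtype) hrepr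
      rw [map_sum] at h
      simp only [DFinsupp.lsum_single, Submodule.subtype_apply] at h
      rw [h, hf]
    -- the element W := sum of representatives
    set W : LinearMap.ker (p + q) := ∑ k ∈ f.support, w k with hWdef
    have hWrange : (W : V) ∈ LinearMap.range (p + q) := by
      have hmk : ((LinearMap.range (p + q)).comap
          (LinearMap.ker (p + q)).subtype).mkQ W = 0 := by
        rw [hWdef, map_sum]
        rw [Finset.sum_congr rfl fun k _ => hweq k]
        exact hfsum
      have := (Submodule.Quotient.mk_eq_zero _).mp (by rwa [Submodule.mkQ_apply] at hmk)
      exact Submodule.mem_comap.mp this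
    obtain ⟨z0, hz0⟩ := hWrange
    -- each representative is p- and q-closed
    have hwU : ∀ k, ((w k : V)) ∈ U k := fun k => Submodule.mem_comap.mp (hw k)
    have hwd : ∀ k, (p + q) ((w k : V)) = 0 := fun k => (w k).2
    have hwpq : ∀ k, p ((w k : V)) = 0 ∧ q ((w k : V)) = 0 :=
      fun k => hpure k _ (hwU k) (hwd k)
    -- W is delta-closed
    have hWdelta : (Complex.I • (q - p)) ((W : V)) = 0 := by
      have hWcoe : (W : V) = ∑ k ∈ f.support, ((w k : V)) := by
        rw [hWdef]; exact AddSubmonoidClass.coe_finset_sum _ _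
      rw [hWcoe, map_sum]
      refine Finset.sum_eq_zero fun k _ => ?_
      rw [LinearMap.smul_apply, LinearMap.sub_apply, (hwpq k).1, (hwpq k).2,
        sub_zero, smul_zero]
    -- so W is in the range of d δ
    have hWmem : (W : V) ∈ LinearMap.range ((p + q) ∘ₗ (Complex.I • (q - p))) := by
      rw [hlem1]
      exact ⟨⟨z0, hz0⟩, LinearMap.mem_ker.mpr hWdelta⟩
    obtain ⟨z, hz⟩ := hWmem
    rw [LinearMap.comp_apply] at hz
    -- decompose z
    obtain ⟨t, e, he, he0, rfl⟩ := exists_decomp_of_internal hU z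
    have hWcoe : (W : V) = ∑ k ∈ f.support, ((w k : V)) := by
      rw [hWdef]; exact AddSubmonoidClass.coe_finset_sum _ _
    -- componentwise comparison
    set g : ℤ → V := fun j =>
      (if j ∈ f.support then ((w j : V)) else 0) -
      (if j ∈ t then (p + q) ((Complex.I • (q - p)) (e j)) else 0) with hgdef
    have hg : ∀ j, g j ∈ U j := by
      intro j
      rw [hgdef]
      refine sub_mem ?_ ?_
      · split_ifs with h
        · exact hwU j
        · exact zero_mem _
      · split_ifs with h
        · exact hDdeltaPure j (e j) (he j)
        · exact zero_mem _
    have hgsum : ∑ j ∈ f.support ∪ t, g j = 0 := by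
      rw [hgdef]
      rw [Finset.sum_sub_distrib]
      rw [Finset.sum_ite_mem, Finset.union_inter_cancel_left]
      rw [Finset.sum_ite_mem, Finset.union_inter_cancel_right]
      rw [← hWcoe]
      have : ∑ j ∈ t, (p + q) ((Complex.I • (q - p)) (e j)) = (W : V) := by
        rw [← map_sum, ← map_sum]
        exact hz
      rw [this, sub_self]
    have hgz := sum_eq_zero_of_internal hU hg hgsum
    -- conclude each representative is exact
    have hexact : ∀ k ∈ f.support, ((w k : V)) ∈ LinearMap.range (p + q) := by
      intro k hk
      have h := hgz k (Finset.mem_union_left _ hk)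
      rw [hgdef] at h
      simp only [if_pos hk] at h
      rw [sub_eq_zero] at h
      rw [h]
      split_ifs with ht
      · exact ⟨(Complex.I • (q - p)) (e k), rfl⟩
      · exact zero_mem _
    -- hence f = 0
    ext k
    by_cases hk : k ∈ f.support
    · have hwR : w k ∈ (LinearMap.range (p + q)).comap
          (LinearMap.ker (p + q)).subtype :=
        Submodule.mem_comap.mpr (hexact k hk)
      have : ((f k : _) : LinearMap.ker (p + q) ⧸
          (LinearMap.range (p + q)).comap (LinearMap.ker (p + q)).subtype) = 0 := by
        rw [← hweq k, Submodule.mkQ_apply, Submodule.Quotient.mk_eq_zero]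
        exact hwR
      have : f k = 0 := Subtype.ext this
      rw [this]
      rfl
    · rw [DFinsupp.notMem_support_iff.mp hk]
      rfl
  · -- the subspaces span the cohomology
    rw [eq_top_iff]
    rintro y -
    obtain ⟨x, rfl⟩ := Submodule.mkQ_surjective _ y
    have hdv : (p + q) ((x : V)) = 0 := x.2
    -- δ x is in the range of d δ
    have h1 : (Complex.I • (q - p)) ((x : V)) ∈
        LinearMap.range ((p + q) ∘ₗ (Complex.I • (q - p))) := by
      rw [hlem2]
      refine Submodule.mem_inf.mpr ⟨LinearMap.mem_ker.mpr ?_, ⟨(x : V), rfl⟩⟩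
      have h := hanti (x : V)
      rw [hdv, map_zero] at h
      exact neg_eq_zero.mp h.symm
    obtain ⟨z, hz⟩ := h1
    rw [LinearMap.comp_apply] at hz
    set v' : V := (x : V) + (p + q) z with hv'def
    have hdv' : (p + q) v' = 0 := by
      rw [hv'def, map_add, hdv, hd2, add_zero]
    have hδv' : (Complex.I • (q - p)) v' = 0 := by
      rw [hv'def, map_add, hanti z, hz]
      exact add_neg_cancel _
    -- p and q vanish on v'
    have hpv : p v' = 0 ∧ q v' = 0 := by
      have h1 : p v' + q v' = 0 := by
        have := hdv'
        rwa [LinearMap.add_apply] at this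
      have h2 : q v' = p v' := by
        have := hδv'
        rw [LinearMap.smul_apply, LinearMap.sub_apply] at this
        have h3 := (smul_eq_zero.mp this).resolve_left Complex.I_ne_zero
        exact sub_eq_zero.mp h3
      have h4 : p v' = 0 := by
        rw [h2] at h1
        have h5 : (2 : ℂ) • p v' = 0 := by rw [two_smul]; exact h1
        exact (smul_eq_zero.mp h5).resolve_left two_ne_zero
      exact ⟨h4, by rw [h2, h4]⟩
    -- decompose v'
    obtain ⟨s, c, hc, hc0, hvsum⟩ := exists_decomp_of_internal hU v'
    have hpc : ∀ k ∈ s, p (c k) = 0 := by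
      have hmem : ∀ j : ℤ, p (c (j - 1)) ∈ U j := by
        intro j
        have := hp (j - 1) _ (hc (j - 1))
        rwa [show j - 1 + 1 = j by ring] at this
      have hsum : ∑ j ∈ s.image (· + 1), p (c (j - 1)) = 0 := by
        rw [Finset.sum_image (fun a _ b _ h => by omega)]
        have heq : ∑ k ∈ s, p (c (k + 1 - 1)) = ∑ k ∈ s, p (c k) := by
          refine Finset.sum_congr rfl fun k _ => ?_
          norm_num
        rw [heq, ← map_sum, ← hvsum, hpv.1]
      intro k hk
      have := sum_eq_zero_of_internal hU hmem hsum (k + 1)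
        (Finset.mem_image_of_mem _ hk)
      simpa using this
    have hqc : ∀ k ∈ s, q (c k) = 0 := by
      have hmem : ∀ j : ℤ, q (c (j + 1)) ∈ U j := by
        intro j
        have := hq (j + 1) _ (hc (j + 1))
        rwa [show j + 1 - 1 = j by ring] at this
      have hsum : ∑ j ∈ s.image (· - 1), q (c (j + 1)) = 0 := by
        rw [Finset.sum_image (fun a _ b _ h => by omega)]
        have heq : ∑ k ∈ s, q (c (k - 1 + 1)) = ∑ k ∈ s, q (c k) := by
          refine Finset.sum_congr rfl fun k _ => ?_
          norm_num
        rw [heq, ← map_sum, ← hvsum, hpv.2]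
      intro k hk
      have := sum_eq_zero_of_internal hU hmem hsum (k - 1)
        (Finset.mem_image_of_mem _ hk)
      simpa using this
    have hdcall : ∀ k : ℤ, (p + q) (c k) = 0 := by
      intro k
      by_cases hk : k ∈ s
      · rw [LinearMap.add_apply, hpc k hk, hqc k hk, add_zero]
      · rw [hc0 k hk, map_zero]
    -- replace x by v'
    set X' : LinearMap.ker (p + q) := ⟨v', LinearMap.mem_ker.mpr hdv'⟩ with hX'def
    have hxX' : ((LinearMap.range (p + q)).comap
        (LinearMap.ker (p + q)).subtype).mkQ x =
        ((LinearMap.range (p + q)).comap (LinearMap.ker (p + q)).subtype).mkQ X' := by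
      rw [Submodule.mkQ_apply, Submodule.mkQ_apply, Submodule.Quotient.eq]
      refine Submodule.mem_comap.mpr ?_
      refine ⟨-z, ?_⟩
      rw [map_neg]
      show -((p + q) z) = ((x : V) - v')
      rw [hv'def]
      abel
    rw [hxX']
    have hX'sum : X' = ∑ k ∈ s,
        (⟨c k, LinearMap.mem_ker.mpr (hdcall k)⟩ : LinearMap.ker (p + q)) := by
      apply Subtype.ext
      rw [AddSubmonoidClass.coe_finset_sum]
      exact hvsum
    rw [hX'sum, map_sum]
    refine Submodule.sum_mem _ fun k _ => Submodule.mem_iSup_of_mem k ?_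
    simp only [cohClasses]
    exact Submodule.mem_map.mpr
      ⟨⟨c k, LinearMap.mem_ker.mpr (hdcall k)⟩,
        Submodule.mem_comap.mpr (hc k), rfl⟩
end

section
/- Let N be the group of unipotent upper-triangular 3×3 complex matrices (matrices with 1's on the diagonal and 0's below), with matrix multiplication. Fix s ∈ ℝ and define u : ℝ⁹ → N by sending (x₁,…,x₉) to the unipotent upper-triangular matrix with (1,2)-entry x₁ + i(x₂ + s·x₃), (2,3)-entry x₄ + i·x₅, and (1,3)-entry x₆ + s·x₇ + i(x₈ + s·x₉). Then for all x, a ∈ ℝ⁹ one has u(x □ a) = u(a) · u(x) (matrix product), where □ is the operation (x₁,…,x₉) □ (a₁,…,a₉) := (a₁+x₁, a₂+x₂, a₃+x₃, a₄+x₄, a₅+x₅, a₆+x₆+a₁x₄−a₂x₅, a₇+x₇−a₃x₅, a₈+x₈+a₁x₅+a₂x₄, a₉+x₉+a₃x₄); moreover u is surjective. -/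
open Matrix

/-- The operation `□` on `ℝ⁹` from Section 3 of the paper. -/
noncomputable def box (x a : Fin 9 → ℝ) : Fin 9 → ℝ :=
  ![a 0 + x 0, a 1 + x 1, a 2 + x 2, a 3 + x 3, a 4 + x 4,
    a 5 + x 5 + a 0 * x 3 - a 1 * x 4,
    a 6 + x 6 - a 2 * x 4,
    a 7 + x 7 + a 0 * x 4 + a 1 * x 3,
    a 8 + x 8 + a 2 * x 3]

/-- The submersion `u : ℝ⁹ → N` from Section 3 of the paper, landing in the group of
unipotent upper-triangular `3 × 3` complex matrices. -/
noncomputable def submer (s : ℝ) (x : Fin 9 → ℝ) : Matrix (Fin 3) (Fin 3) ℂ :=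
  !![1, (x 0 : ℂ) + Complex.I * ((x 1 : ℂ) + (s : ℂ) * (x 2 : ℂ)),
        (x 5 : ℂ) + (s : ℂ) * (x 6 : ℂ) + Complex.I * ((x 7 : ℂ) + (s : ℂ) * (x 8 : ℂ));
     0, 1, (x 3 : ℂ) + Complex.I * (x 4 : ℂ);
     0, 0, 1]

section aux
variable {α : Type*} (b0 b1 b2 b3 b4 b5 b6 b7 b8 : α)

@[simp] lemma vec9_five : ![b0, b1, b2, b3, b4, b5, b6, b7, b8] 5 = b5 := rfl
@[simp] lemma vec9_six : ![b0, b1, b2, b3, b4, b5, b6, b7, b8] 6 = b6 := rfl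
@[simp] lemma vec9_seven : ![b0, b1, b2, b3, b4, b5, b6, b7, b8] 7 = b7 := rfl
@[simp] lemma vec9_eight : ![b0, b1, b2, b3, b4, b5, b6, b7, b8] 8 = b8 := rfl

end aux

/-- Section 3 of the paper: the map `u` satisfies `u (x □ a) = u a * u x`, and `u` is
surjective onto the unipotent upper-triangular `3 × 3` complex matrices. -/
theorem stmt13 (s : ℝ) :
    (∀ x a : Fin 9 → ℝ, submer s (box x a) = submer s a * submer s x) ∧
    (∀ M : Matrix (Fin 3) (Fin 3) ℂ,
      M 0 0 = 1 → M 1 1 = 1 → M 2 2 = 1 → M 1 0 = 0 → M 2 0 = 0 → M 2 1 = 0 →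
      ∃ x : Fin 9 → ℝ, submer s x = M) := by
  constructor
  · intro x a
    ext i j
    fin_cases i <;> fin_cases j <;>
      simp [submer, box, Matrix.mul_apply, Fin.sum_univ_three, Complex.ext_iff,
        Matrix.vecHead, Matrix.vecTail] <;>
      exact ⟨by ring, by ring⟩
  · intro M h00 h11 h22 h10 h20 h21
    refine ⟨![(M 0 1).re, (M 0 1).im, 0, (M 1 2).re, (M 1 2).im, (M 0 2).re, 0, (M 0 2).im, 0], ?_⟩
    ext i j
    fin_cases i <;> fin_cases j <;>
      simp [submer, h00, h11, h22, h10, h20, h21, Complex.ext_iff, Matrix.vecHead, Matrix.vecTail]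
end
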